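/- arXiv:1606.01013 — 2 statements merged into one kernel-verified Lean document; each statement's English description precedes it below -/
import Mathlib

section
/- Every paracompact Hausdorff space admitting a compact resolution is Lindelöf. -/
open Topology Filter

/-- If `A` is an uncountable set of functions `ℕ → ℕ`, then some `α` pointwise dominates
infinitely many members of `A`. -/
lemma exists_dominating_infinite (A : Set (ℕ → ℕ)) (hA : ¬ A.Countable) :
    ∃ α : ℕ → ℕ, {f ∈ A | ∀ i, f i ≤ α i}.Infinite := by
  -- key step: refine an uncountable set, fixing coordinate `n` and extracting an element
  have key : ∀ (s : {s : Set (ℕ → ℕ) // ¬ s.Countable}) (n : ℕ),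
      ∃ p : (ℕ → ℕ) × {t : Set (ℕ → ℕ) // ¬ t.Countable},
        p.1 ∈ s.1 ∧ p.2.1 ⊆ s.1 ∧ p.1 ∉ p.2.1 ∧ ∀ g ∈ p.2.1, g n = p.1 n := by
    rintro ⟨s, hs⟩ n
    have : ∃ k : ℕ, ¬ {f ∈ s | f n = k}.Countable := by
      by_contra h
      push_neg at h
      apply hs
      have hsub : s ⊆ ⋃ k : ℕ, {f ∈ s | f n = k} := by
        intro f hf
        exact Set.mem_iUnion.mpr ⟨f n, hf, rfl⟩
      exact (Set.countable_iUnion h).mono hsub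
    obtain ⟨k, hk⟩ := this
    have hne : {f ∈ s | f n = k}.Nonempty := by
      rcases Set.eq_empty_or_nonempty {f ∈ s | f n = k} with h | h
      · exact absurd (h ▸ Set.countable_empty) hk
      · exact h
    obtain ⟨f, hfs, hfn⟩ := hne
    refine ⟨⟨f, ⟨{g ∈ s | g n = k} \ {f}, ?_⟩⟩, hfs, ?_, ?_, ?_⟩
    · intro hc
      exact hk (by simpa using hc.insert f)
    · exact fun g hg => hg.1.1
    · exact fun hg => hg.2 rfl
    · rintro g ⟨⟨-, hgk⟩, -⟩
      rw [hgk]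
      exact hfn.symm
  choose Φ h1 h2 h3 h4 using key
  -- recursively build the decreasing sequence of uncountable sets and chosen functions
  let R : ℕ → {s : Set (ℕ → ℕ) // ¬ s.Countable} :=
    fun n => Nat.rec ⟨A, hA⟩ (fun n s => (Φ s n).2) n
  let f : ℕ → (ℕ → ℕ) := fun n => (Φ (R n) n).1
  have hR : ∀ n, R (n + 1) = (Φ (R n) n).2 := fun n => rfl
  have hmem : ∀ n, f n ∈ (R n).1 := fun n => h1 (R n) n
  have hsub : ∀ n, (R (n + 1)).1 ⊆ (R n).1 := fun n => by rw [hR]; exact h2 (R n) n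
  have hnot : ∀ n, f n ∉ (R (n + 1)).1 := fun n => by rw [hR]; exact h3 (R n) n
  have hconst : ∀ n, ∀ g ∈ (R (n + 1)).1, g n = f n n := fun n => by
    rw [hR]; exact h4 (R n) n
  -- chain
  have hchain : ∀ m n, n ≤ m → (R m).1 ⊆ (R n).1 := by
    intro m n h
    induction m with
    | zero => rw [Nat.le_zero.mp h]
    | succ m ih =>
      rcases Nat.lt_or_ge n (m + 1) with h' | h'
      · exact (hsub m).trans (ih (Nat.lt_succ_iff.mp h'))
      · rw [Nat.le_antisymm h h']
  have hRA : ∀ n, (R n).1 ⊆ A := by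
    intro n
    have := hchain n 0 (Nat.zero_le n)
    exact this
  -- coordinates agree
  have hcoord : ∀ i n, i < n → f n i = f i i := by
    intro i n hin
    exact hconst i (f n) (hchain n (i + 1) hin (hmem n))
  -- injectivity
  have hinj : Function.Injective f := by
    intro n m hnm
    by_contra hne
    rcases Nat.lt_or_ge n m with h | h
    · exact hnot n (hnm ▸ hchain m (n + 1) h (hmem m))
    · have h' : m < n := lt_of_le_of_ne h (Ne.symm hne)
      exact hnot m (hnm ▸ hchain n (m + 1) h' (hmem n))
  refine ⟨fun i => (Finset.range (i + 1)).sup (fun m => f m i), ?_⟩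
  apply Set.infinite_of_injective_forall_mem (f := f) hinj
  intro n
  refine ⟨hRA n (hmem n), fun i => ?_⟩
  show f n i ≤ (Finset.range (i + 1)).sup fun m => f m i
  rcases Nat.lt_or_ge i n with h | h
  · rw [hcoord i n h]
    exact Finset.le_sup (f := fun m => f m i) (Finset.self_mem_range_succ i)
  · exact Finset.le_sup (f := fun m => f m i) (Finset.mem_range.mpr (Nat.lt_succ_of_le h))

/-- A set covered by a monotone `ω^ω`-indexed family of finite sets is countable. -/
lemma countable_of_finite_resolution {Y : Type*} (A : Set Y) (F : (ℕ → ℕ) → Set Y)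
    (hfin : ∀ α, (F α).Finite)
    (hmono : ∀ α β : ℕ → ℕ, (∀ n, α n ≤ β n) → F α ⊆ F β)
    (hcov : A ⊆ ⋃ α, F α) : A.Countable := by
  by_contra hA
  have hsel : ∀ y : A, ∃ α : ℕ → ℕ, (y : Y) ∈ F α := by
    intro y
    have := hcov y.2
    simpa using this
  choose g hg using hsel
  have hBc : ¬ (Set.range g).Countable := by
    intro hc
    apply hA
    have : A ⊆ ⋃ α ∈ Set.range g, F α := by
      intro y hy
      exact Set.mem_biUnion ⟨⟨y, hy⟩, rfl⟩ (hg ⟨y, hy⟩)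
    exact ((Set.Countable.biUnion hc (fun α _ => (hfin α).countable)).mono this)
  obtain ⟨α, hα⟩ := exists_dominating_infinite _ hBc
  have : Infinite {f // f ∈ {f ∈ Set.range g | ∀ i, f i ≤ α i}} := hα.to_subtype
  have hsel2 : ∀ f : {f // f ∈ {f ∈ Set.range g | ∀ i, f i ≤ α i}}, ∃ y : A, g y = f.1 :=
    fun f => f.2.1
  choose h hh using hsel2
  have : (F α).Infinite := by
    apply Set.infinite_of_injective_forall_mem (f := fun f => ((h f : A) : Y))
    · intro a b hab
      have : g (h a) = g (h b) := by
        have hab' : (h a : A) = h b := Subtype.ext hab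
        rw [hab']
      rw [hh a, hh b] at this
      exact Subtype.ext this
    · intro f
      have := hg (h f)
      rw [hh f] at this
      exact hmono _ _ f.2.2 this
  exact this (hfin α)

theorem stmt18 {X : Type*} [TopologicalSpace X] [T2Space X] [ParacompactSpace X]
    (K : (ℕ → ℕ) → Set X) (hcomp : ∀ α, IsCompact (K α))
    (hcover : ⋃ α, K α = Set.univ)
    (hmono : ∀ α β : ℕ → ℕ, (∀ n, α n ≤ β n) → K α ⊆ K β) :
    LindelofSpace X := by
  constructor
  rw [isLindelof_iff_countable_subcover]
  intro ι U hUo hUc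
  -- precise locally finite refinement
  obtain ⟨v, hvo, hvc, hvlf, hvu⟩ := precise_refinement U hUo
    (Set.univ_subset_iff.mp hUc)
  -- indices whose refined set meets K α
  set F : (ℕ → ℕ) → Set ι := fun α => {i | (v i ∩ K α).Nonempty} with hF
  have hfin : ∀ α, (F α).Finite := fun α => hvlf.finite_nonempty_inter_compact (hcomp α)
  have hFmono : ∀ α β : ℕ → ℕ, (∀ n, α n ≤ β n) → F α ⊆ F β := by
    intro α β hab i hi
    obtain ⟨x, hx1, hx2⟩ := hi
    exact ⟨x, hx1, hmono α β hab hx2⟩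
  have hFcov : {i | (v i).Nonempty} ⊆ ⋃ α, F α := by
    intro i hi
    obtain ⟨x, hx⟩ := hi
    have : x ∈ ⋃ α, K α := hcover ▸ Set.mem_univ x
    obtain ⟨α, hα⟩ := Set.mem_iUnion.mp this
    exact Set.mem_iUnion.mpr ⟨α, ⟨x, hx, hα⟩⟩
  have hcount : {i | (v i).Nonempty}.Countable :=
    countable_of_finite_resolution _ F hfin hFmono hFcov
  refine ⟨{i | (v i).Nonempty}, hcount, ?_⟩
  intro x _
  have : x ∈ ⋃ i, v i := hvc ▸ Set.mem_univ x
  obtain ⟨i, hi⟩ := Set.mem_iUnion.mp this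
  exact Set.mem_biUnion ⟨x, hi⟩ (hvu i hi)
end

section
/- Let X be a non-discrete locally compact Hausdorff space. Then C_p(X, [0,1]) (continuous functions from X to [0,1] with the pointwise convergence topology) contains a closed infinite discrete subspace. -/
open Topology Filter

/-- `CpI X` : continuous functions from `X` to `[0,1]` with the topology of
pointwise convergence (subspace of the product `X → [0,1]`). -/
abbrev CpI (X : Type*) [TopologicalSpace X] : Type _ :=
  {f : X → Set.Icc (0 : ℝ) 1 // Continuous f}

/-- Evaluation (as a real number) at a point is continuous on `CpI X`. -/
lemma CpI.continuous_eval {X : Type*} [TopologicalSpace X] (t : X) :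
    Continuous (fun h : CpI X => ((h.1 t : ℝ))) := by
  exact (continuous_subtype_val.comp ((continuous_apply t).comp continuous_subtype_val))

theorem stmt19 {X : Type*} [TopologicalSpace X] [T2Space X] [LocallyCompactSpace X]
    (hnd : ¬DiscreteTopology X) :
    ∃ D : Set (CpI X), D.Infinite ∧ IsClosed D ∧ DiscreteTopology D := by
  -- a non-isolated point p
  have hp : ∃ p : X, ¬IsOpen ({p} : Set X) := by
    by_contra h
    push_neg at h
    exact hnd (discreteTopology_iff_isOpen_singleton.mpr h)
  obtain ⟨p, hp⟩ := hp
  have hpnb : NeBot (𝓝[≠] p) := by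
    rw [isOpen_singleton_iff_punctured_nhds] at hp
    exact ⟨hp⟩
  -- a compact neighborhood K of p; it is infinite
  obtain ⟨K, hKc, hKnb⟩ := exists_compact_mem_nhds p
  have hKinf : K.Infinite := infinite_of_mem_nhds p hKnb
  -- an injective sequence in K
  let e : ℕ ↪ K := hKinf.natEmbedding K
  set x : ℕ → X := fun n => (e n : X) with hx
  have hxinj : Function.Injective x := fun a b hab => e.injective (Subtype.ext hab)
  have hxK : ∀ n, x n ∈ K := fun n => (e n).2
  -- a cluster point q of the sequence x in K
  have hmaple : map x atTop ≤ 𝓟 K := by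
    rw [le_principal_iff]
    exact mem_map.mpr (Filter.mem_of_superset (Filter.univ_mem) (fun n _ => hxK n))
  obtain ⟨q, hqK, hqcl⟩ := hKc.exists_clusterPt hmaple
  -- shift the sequence so that q is not in its range
  obtain ⟨y, hyinj, hqy, hycl⟩ :
      ∃ y : ℕ → X, Function.Injective y ∧ (∀ n, y n ≠ q) ∧ ClusterPt q (map y atTop) := by
    by_cases hq : ∃ n, x n = q
    · obtain ⟨i, hi⟩ := hq
      refine ⟨fun n => x (n + (i + 1)), fun a b hab => by
        have := hxinj hab; omega, fun n h => ?_, ?_⟩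
      · have : n + (i + 1) = i := hxinj (h.trans hi.symm)
        omega
      · have heq : (fun n => x (n + (i + 1))) = x ∘ (fun n => n + (i + 1)) := rfl
        have : map (fun n => x (n + (i + 1))) atTop = map x atTop := by
          rw [heq, ← Filter.map_map, Filter.map_add_atTop_eq_nat]
        rwa [this]
    · push_neg at hq
      exact ⟨x, hxinj, hq, hqcl⟩
  -- q is in the closure of the range of y
  have hqclos : q ∈ closure (Set.range y) := by
    rw [mem_closure_iff_clusterPt]
    refine hycl.mono ?_
    rw [le_principal_iff]
    exact mem_map.mpr (Filter.mem_of_superset Filter.univ_mem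
      (fun n _ => Set.mem_range_self n))
  -- build the functions
  have hurysohn : ∀ n : ℕ, ∃ h : CpI X, (h.1 q : ℝ) = 1 ∧ (h.1 (y n) : ℝ) = 1 ∧
      ∀ i < n, (h.1 (y i) : ℝ) = 0 := by
    intro n
    have hscomp : IsCompact ({q, y n} : Set X) := ((Set.finite_singleton (y n)).insert q).isCompact
    have htfin : (y '' {i | i < n}).Finite := (Set.finite_Iio n).image y
    have htcl : IsClosed (y '' {i | i < n}) := htfin.isClosed
    have hdisj : Disjoint ({q, y n} : Set X) (y '' {i | i < n}) := by
      rw [Set.disjoint_left]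
      intro a ha hmem
      obtain ⟨i, hi, rfl⟩ := hmem
      rcases ha with h | h
      · exact hqy i h
      · exact Nat.lt_irrefl n (hyinj h ▸ hi)
    obtain ⟨f, hf0, hf1, hf01⟩ := exists_continuous_zero_one_of_isCompact hscomp htcl hdisj
    refine ⟨⟨fun t => ⟨1 - f t, ?_⟩, ?_⟩, ?_, ?_, ?_⟩
    · have := hf01 t
      constructor <;> [linarith [this.2]; linarith [this.1]]
    · exact Continuous.subtype_mk (continuous_const.sub f.continuous) _
    · have : f q = 0 := hf0 (Set.mem_insert q _)
      simp [this]
    · have : f (y n) = 0 := hf0 (Set.mem_insert_of_mem _ rfl)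
      simp [this]
    · intro i hi
      have : f (y i) = 1 := hf1 ⟨i, hi, rfl⟩
      simp [this]
  choose fseq hq1 hyn1 hyi0 using hurysohn
  -- fseq is injective
  have hfinj : Function.Injective fseq := by
    intro a b hab
    by_contra hne
    rcases Nat.lt_or_ge a b with h | h
    · have h1 : (fseq a).1 (y a) = (fseq b).1 (y a) := by rw [hab]
      have := hyi0 b a h
      rw [Subtype.ext_iff] at h1
      rw [hyn1 a] at h1
      rw [← h1] at this; norm_num at this
    · have hlt : b < a := lt_of_le_of_ne h (Ne.symm hne)
      have h1 : (fseq a).1 (y b) = (fseq b).1 (y b) := by rw [hab]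
      have := hyi0 a b hlt
      rw [Subtype.ext_iff] at h1
      rw [hyn1 b] at h1
      rw [this] at h1; norm_num at h1
  refine ⟨Set.range fseq, Set.infinite_range_of_injective hfinj, ?_, ?_⟩
  · -- closedness
    refine isClosed_of_closure_subset ?_
    intro g hg
    by_contra hgD
    -- g q = 1
    have hgq : (g.1 q : ℝ) = 1 := by
      by_contra hne
      have hopen : IsOpen {h : CpI X | (h.1 q : ℝ) ≠ 1} :=
        isOpen_compl_singleton.preimage (CpI.continuous_eval q)
      obtain ⟨h, hhU, m, rfl⟩ := mem_closure_iff.mp hg _ hopen hne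
      exact hhU (hq1 m)
    -- g (y i) = 0 for all i
    have hgy : ∀ i, (g.1 (y i) : ℝ) = 0 := by
      intro i
      by_contra hne
      set U : Set (CpI X) :=
        {h | (h.1 (y i) : ℝ) ≠ 0} ∩ ⋂ m ∈ Finset.range (i + 1), {fseq m}ᶜ with hU
      have hopen : IsOpen U := by
        refine IsOpen.inter (isOpen_compl_singleton.preimage (CpI.continuous_eval (y i))) ?_
        exact isOpen_biInter_finset (fun m _ => isOpen_compl_singleton)
      have hgU : g ∈ U := by
        refine ⟨hne, Set.mem_biInter fun m _ => ?_⟩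
        intro hgm
        exact hgD ⟨m, (Set.mem_singleton_iff.mp hgm).symm⟩
      obtain ⟨h, hhU, m, rfl⟩ := mem_closure_iff.mp hg _ hopen hgU
      rcases Nat.lt_or_ge i m with hlt | hle
      · exact hhU.1 (hyi0 m i hlt)
      · have : fseq m ∈ ({fseq m}ᶜ : Set (CpI X)) :=
          Set.mem_iInter₂.mp hhU.2 m (Finset.mem_range.mpr (Nat.lt_succ_of_le hle))
        exact this rfl
    -- contradiction with continuity of g at q
    have hCcl : IsClosed {t : X | (g.1 t : ℝ) = 0} :=
      isClosed_singleton.preimage (continuous_subtype_val.comp g.2)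
    have hsub : Set.range y ⊆ {t : X | (g.1 t : ℝ) = 0} := by
      rintro _ ⟨i, rfl⟩; exact hgy i
    have : (g.1 q : ℝ) = 0 := (hCcl.closure_subset_iff.mpr hsub) hqclos
    rw [hgq] at this; norm_num at this
  · -- discreteness
    -- each fseq n is isolated
    have hiso : ∀ n : ℕ, ∃ U : Set (CpI X), IsOpen U ∧ fseq n ∈ U ∧
        ∀ m, fseq m ∈ U → m = n := by
      intro n
      refine ⟨{h | (h.1 (y n) : ℝ) ≠ 0} ∩ ⋂ m ∈ Finset.range n, {fseq m}ᶜ, ?_, ?_, ?_⟩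
      · refine IsOpen.inter (isOpen_compl_singleton.preimage (CpI.continuous_eval (y n))) ?_
        exact isOpen_biInter_finset (fun m _ => isOpen_compl_singleton)
      · refine ⟨by rw [Set.mem_setOf_eq, hyn1 n]; norm_num, Set.mem_biInter fun m hm => ?_⟩
        intro hmem
        exact absurd (hfinj (Set.mem_singleton_iff.mp hmem)).symm
          (Nat.ne_of_lt (Finset.mem_range.mp hm))
      · intro m hm
        rcases Nat.lt_trichotomy m n with h | h | h
        · exact absurd rfl (Set.mem_iInter₂.mp hm.2 m (Finset.mem_range.mpr h))
        · exact h
        · exact absurd (hyi0 m n h) hm.1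
    rw [discreteTopology_iff_isOpen_singleton]
    rintro ⟨_, n, rfl⟩
    obtain ⟨U, hUo, hUn, hUonly⟩ := hiso n
    have : ({⟨fseq n, n, rfl⟩} : Set (Set.range fseq)) = Subtype.val ⁻¹' U := by
      ext ⟨h, m, rfl⟩
      simp only [Set.mem_singleton_iff, Set.mem_preimage, Subtype.mk.injEq]
      constructor
      · intro he; rw [show fseq m = fseq n from congrArg Subtype.val he]; exact hUn
      · intro he; rw [hUonly m he]
    rw [this]
    exact hUo.preimage continuous_subtype_val
end
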